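/- Let π = r_0 ⋯ r_n be a closed finite trace over U and let M = (S,P,μ) be a finite-state Markov chain over U. Then L(M,π) ≥ L(M',π) for every finite-state Markov chain M' over U if and only if the following three conditions hold: (i) μ(r_0) = 1; (ii) the set of states of M reachable from r_0 (via transitions of positive probability) equals S_π; and (iii) P(r,r') = P_π(r,r') for all r, r' ∈ S_π. -/

import Mathlib

open Finset

/-- A finite-state Markov chain over the state universe `U`: a finite nonempty
set `S` of states, a transition probability matrix `P` supported in `S × S`
whose rows (indexed by states of `S`) sum to `1`, and an initial probability
distribution `μ` supported in `S`. -/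
structure FinMC (U : Type*) where
  S : Finset U
  S_ne : S.Nonempty
  P : U → U → ℝ
  P_nonneg : ∀ a b, 0 ≤ P a b
  P_le_one : ∀ a b, P a b ≤ 1
  P_zero : ∀ a b, a ∉ S ∨ b ∉ S → P a b = 0
  P_row : ∀ a ∈ S, ∑ b ∈ S, P a b = 1
  μ : U → ℝ
  μ_nonneg : ∀ a, 0 ≤ μ a
  μ_zero : ∀ a, a ∉ S → μ a = 0
  μ_sum : ∑ a ∈ S, μ a = 1

/-- The likelihood `L(M, π) = μ(r 0) · ∏_{i=1}^{n} P(r (i-1), r i)` that the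
chain `M` generates the finite trace `π = r 0 ⋯ r n`. -/
def FinMC.lik {U : Type*} (M : FinMC U) (r : ℕ → U) (n : ℕ) : ℝ :=
  M.μ (r 0) * ∏ i ∈ range n, M.P (r i) (r (i + 1))

/-- `traceT r n a b` is the number of indices `0 ≤ i ≤ n - 1` with
`r i = a` and `r (i+1) = b`, i.e. the number of occurrences of the
transition `(a, b)` in the trace `r 0 ⋯ r n`. -/
def traceT {U : Type*} [DecidableEq U] (r : ℕ → U) (n : ℕ) (a b : U) : ℕ :=
  ((range n).filter (fun i => r i = a ∧ r (i + 1) = b)).card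

/-- The set of states `{r 0, …, r n}` occurring in the trace `r 0 ⋯ r n`. -/
def traceStates {U : Type*} [DecidableEq U] (r : ℕ → U) (n : ℕ) : Finset U :=
  (range (n + 1)).image r

/-- The empirical transition matrix of the trace `r 0 ⋯ r n`:
`P_π(a, b) = T_π(a, b) / ∑_{c} T_π(a, c)`. -/
noncomputable def traceP {U : Type*} [DecidableEq U] (r : ℕ → U) (n : ℕ) (a b : U) : ℝ :=
  (traceT r n a b : ℝ) / ∑ c ∈ traceStates r n, (traceT r n a c : ℝ)

/-- The likelihood `L(M_π, π)` that the induced chain `M_π` generates `π`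
(the initial distribution of `M_π` gives probability 1 to `r 0`). -/
noncomputable def traceLik {U : Type*} [DecidableEq U] (r : ℕ → U) (n : ℕ) : ℝ :=
  ∏ i ∈ range n, traceP r n (r i) (r (i + 1))

/-- `M.reach a b`: state `b` is reachable from `a` in `M` via transitions of
positive probability. -/
def FinMC.reach {U : Type*} (M : FinMC U) : U → U → Prop :=
  Relation.ReflTransGen (fun a b => 0 < M.P a b)


/-
Grouping the factors of `L(M, π)` by transition gives
`L(M, π) = μ(r₀) · ∏_a ∏_b P(a, b) ^ T_π(a, b)`. By Gibbs' inequality each row factor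
`∏_b P(a, b) ^ T_π(a, b)` is largest, among sub-stochastic rows, exactly at the empirical row
`P_π(a, ·)`; closedness of `π` makes every state of `π` the source of some transition, so these
maxima are positive and `M_π` is a genuine Markov chain. Hence `L(M, π) ≤ L(M_π, π)`, with equality
iff `μ(r₀) = 1` and `P = P_π` on `S_π × S_π`. In that case the rows of `P` are stochastic within
`S_π`, so no state outside `S_π` is reachable, while `π` itself is a path of positive-probability
transitions through all of `S_π`.
-/

section Gibbs

lemma Finset.prod_lt_prod_of_nonneg {ι R : Type*} [CommSemiring R] [PartialOrder R]
    [IsStrictOrderedRing R] {s : Finset ι} {f g : ι → R} (hf : ∀ i ∈ s, 0 ≤ f i)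
    (hfg : ∀ i ∈ s, f i ≤ g i) (hg : ∀ i ∈ s, 0 < g i) (hlt : ∃ i ∈ s, f i < g i) :
    ∏ i ∈ s, f i < ∏ i ∈ s, g i := by
  classical
  obtain ⟨i, hi, hfgi⟩ := hlt
  rw [← mul_prod_erase s f hi, ← mul_prod_erase s g hi]
  exact mul_lt_mul_of_lt_of_le_of_nonneg_of_pos hfgi
    (prod_le_prod (fun j hj => hf j (mem_of_mem_erase hj)) fun j hj => hfg j (mem_of_mem_erase hj))
    (hf i hi) (prod_pos fun j hj => hg j (mem_of_mem_erase hj))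

lemma le_mul_exp_div_sub_one {x p : ℝ} (hp : 0 < p) : x ≤ p * Real.exp (x / p - 1) := by
  rw [← div_le_iff₀' hp]
  simpa using Real.add_one_le_exp (x / p - 1)

lemma lt_mul_exp_div_sub_one {x p : ℝ} (hp : 0 < p) (hx : x ≠ p) :
    x < p * Real.exp (x / p - 1) := by
  rw [← div_lt_iff₀' hp]
  have hxp : x / p - 1 ≠ 0 := by rwa [sub_ne_zero, ne_eq, div_eq_one_iff_eq hp.ne']
  simpa using Real.add_one_lt_exp hxp

lemma mul_exp_div_sub_one_pow {x N : ℝ} {k : ℕ} (hk : k ≠ 0) :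
    ((k / N) * Real.exp (x / (k / N) - 1)) ^ k = (k / N) ^ k * Real.exp (N * x - k) := by
  rw [mul_pow, ← Real.exp_nat_mul]
  congr 2
  field_simp

-- Gibbs' inequality term by term: over a row the factors `exp (N * x i - k i)` multiply to
-- `exp (N * (∑ i, x i - 1)) ≤ 1`.
lemma pow_le_div_pow_mul_exp {x N : ℝ} (hN : 0 < N) (hx : 0 ≤ x) (k : ℕ) :
    x ^ k ≤ (k / N) ^ k * Real.exp (N * x - k) := by
  rcases eq_or_ne k 0 with rfl | hk
  · simpa using Real.one_le_exp (mul_nonneg hN.le hx)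
  · rw [← mul_exp_div_sub_one_pow hk]
    exact pow_le_pow_left₀ hx (le_mul_exp_div_sub_one (by positivity)) k

lemma pow_lt_div_pow_mul_exp {x N : ℝ} (hN : 0 < N) (hx : 0 ≤ x) {k : ℕ} (hne : x ≠ k / N) :
    x ^ k < (k / N) ^ k * Real.exp (N * x - k) := by
  rcases eq_or_ne k 0 with rfl | hk
  · simpa using Real.one_lt_exp_iff.2 (mul_pos hN (hx.lt_of_ne (by simpa using hne.symm)))
  · rw [← mul_exp_div_sub_one_pow hk]
    exact pow_lt_pow_left₀ (lt_mul_exp_div_sub_one (by positivity) hne) hx hk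

variable {ι : Type*} {s : Finset ι} {k : ι → ℕ} {x : ι → ℝ}

lemma div_sum_pow_pos {i : ι} (hi : i ∈ s) : 0 < ((k i : ℝ) / ∑ j ∈ s, (k j : ℝ)) ^ k i := by
  rcases eq_or_ne (k i) 0 with hk | hk
  · simp [hk]
  · have hki : (0 : ℝ) < k i := by positivity
    have hsum : (k i : ℝ) ≤ ∑ j ∈ s, (k j : ℝ) :=
      single_le_sum (f := fun j => (k j : ℝ)) (fun j _ => by positivity) hi
    exact pow_pos (div_pos hki (hki.trans_le hsum)) _

lemma prod_div_sum_pow_mul_exp_le (hsum : ∑ i ∈ s, x i ≤ 1) :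
    ∏ i ∈ s, ((k i : ℝ) / ∑ j ∈ s, (k j : ℝ)) ^ k i
        * Real.exp ((∑ j ∈ s, (k j : ℝ)) * x i - k i) ≤
      ∏ i ∈ s, ((k i : ℝ) / ∑ j ∈ s, (k j : ℝ)) ^ k i := by
  rw [prod_mul_distrib, ← Real.exp_sum, sum_sub_distrib, ← mul_sum]
  refine mul_le_of_le_one_right (prod_pos fun i hi => div_sum_pow_pos hi).le
    (Real.exp_le_one_iff.2 ?_)
  nlinarith [sum_nonneg fun j (_ : j ∈ s) => Nat.cast_nonneg (α := ℝ) (k j)]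

theorem prod_pow_le_prod_div_sum_pow (hk : 0 < ∑ i ∈ s, (k i : ℝ)) (hx : ∀ i ∈ s, 0 ≤ x i)
    (hsum : ∑ i ∈ s, x i ≤ 1) :
    ∏ i ∈ s, x i ^ k i ≤ ∏ i ∈ s, ((k i : ℝ) / ∑ j ∈ s, (k j : ℝ)) ^ k i :=
  (prod_le_prod (fun i hi => pow_nonneg (hx i hi) _)
    fun i hi => pow_le_div_pow_mul_exp hk (hx i hi) (k i)).trans
    (prod_div_sum_pow_mul_exp_le hsum)

theorem prod_pow_lt_prod_div_sum_pow (hk : 0 < ∑ i ∈ s, (k i : ℝ)) (hx : ∀ i ∈ s, 0 ≤ x i)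
    (hsum : ∑ i ∈ s, x i ≤ 1) (hne : ∃ i ∈ s, x i ≠ k i / ∑ j ∈ s, (k j : ℝ)) :
    ∏ i ∈ s, x i ^ k i < ∏ i ∈ s, ((k i : ℝ) / ∑ j ∈ s, (k j : ℝ)) ^ k i := by
  refine (prod_lt_prod_of_nonneg (fun i hi => pow_nonneg (hx i hi) _)
    (fun i hi => pow_le_div_pow_mul_exp hk (hx i hi) (k i)) (fun i hi => ?_) ?_).trans_le
    (prod_div_sum_pow_mul_exp_le hsum)
  · exact mul_pos (div_sum_pow_pos hi) (Real.exp_pos _)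
  · obtain ⟨i, hi, hne⟩ := hne
    exact ⟨i, hi, pow_lt_div_pow_mul_exp hk (hx i hi) hne⟩

end Gibbs

namespace FinMC

variable {U : Type*} (M : FinMC U)

lemma μ_le_one (a : U) : M.μ a ≤ 1 := by
  by_cases ha : a ∈ M.S
  · exact M.μ_sum ▸ single_le_sum (fun b _ => M.μ_nonneg b) ha
  · rw [M.μ_zero a ha]
    exact zero_le_one

lemma sum_P_le_one (a : U) (t : Finset U) : ∑ b ∈ t, M.P a b ≤ 1 := by
  classical
  by_cases ha : a ∈ M.S
  · calc ∑ b ∈ t, M.P a b ≤ ∑ b ∈ t ∪ M.S, M.P a b :=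
          sum_le_sum_of_subset_of_nonneg subset_union_left fun b _ _ => M.P_nonneg a b
      _ = ∑ b ∈ M.S, M.P a b :=
          (sum_subset subset_union_right fun b _ hb => M.P_zero a b (Or.inr hb)).symm
      _ = 1 := M.P_row a ha
  · simp [M.P_zero a _ (Or.inl ha)]

lemma mem_of_reach {T : Finset U} (hT : ∀ a ∈ T, ∑ b ∈ T, M.P a b = 1) {a b : U} (ha : a ∈ T)
    (hab : M.reach a b) : b ∈ T := by
  classical
  induction hab with
  | refl => exact ha
  | @tail b c _ hbc hb =>
    by_contra hc
    have := M.sum_P_le_one b (insert c T)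
    rw [sum_insert hc, hT b hb] at this
    linarith [show 0 < M.P b c from hbc]

lemma reach_of_P_pos {r : ℕ → U} {n : ℕ} (hr : ∀ i < n, 0 < M.P (r i) (r (i + 1))) {j : ℕ}
    (hj : j ≤ n) : M.reach (r 0) (r j) := by
  induction j with
  | zero => exact .refl
  | succ j ih => exact (ih (by omega)).tail (hr j (by omega))

end FinMC

section Trace

variable {U : Type*} [DecidableEq U] (r : ℕ → U) (n : ℕ)

lemma mem_traceStates {j : ℕ} (hj : j ≤ n) : r j ∈ traceStates r n :=
  mem_image_of_mem r (mem_range.2 (Nat.lt_succ_of_le hj))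

lemma traceT_pos {i : ℕ} (hi : i < n) : 0 < traceT r n (r i) (r (i + 1)) :=
  card_pos.2 ⟨i, mem_filter.2 ⟨mem_range.2 hi, rfl, rfl⟩⟩

lemma traceT_eq_zero {a b : U} (h : a ∉ traceStates r n ∨ b ∉ traceStates r n) :
    traceT r n a b = 0 := by
  refine card_eq_zero.2 (filter_eq_empty_iff.2 fun i hi ⟨hia, hib⟩ => ?_)
  have hi : i < n := mem_range.1 hi
  rcases h with h | h
  · exact h (hia ▸ mem_traceStates r n hi.le)
  · exact h (hib ▸ mem_traceStates r n hi)

lemma traceT_le_sum (a b : U) :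
    (traceT r n a b : ℝ) ≤ ∑ c ∈ traceStates r n, (traceT r n a c : ℝ) := by
  by_cases hb : b ∈ traceStates r n
  · exact single_le_sum (f := fun c => (traceT r n a c : ℝ)) (fun c _ => by positivity) hb
  · rw [traceT_eq_zero r n (Or.inr hb), Nat.cast_zero]
    positivity

lemma prod_eq_prod_pow_traceT {M : Type*} [CommMonoid M] (f : U → U → M) :
    ∏ i ∈ range n, f (r i) (r (i + 1)) =
      ∏ a ∈ traceStates r n, ∏ b ∈ traceStates r n, f a b ^ traceT r n a b := by
  have hmaps : ∀ i ∈ range n, (r i, r (i + 1)) ∈ traceStates r n ×ˢ traceStates r n :=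
    fun i hi => mk_mem_product (mem_traceStates r n (mem_range.1 hi).le)
      (mem_traceStates r n (mem_range.1 hi))
  rw [← prod_fiberwise_of_maps_to hmaps, prod_product]
  refine prod_congr rfl fun a _ => prod_congr rfl fun b _ => ?_
  simp only [Prod.mk.injEq]
  rw [traceT, ← prod_const]
  exact prod_congr rfl fun i hi => by rw [(mem_filter.1 hi).2.1, (mem_filter.1 hi).2.2]

lemma traceP_nonneg (a b : U) : 0 ≤ traceP r n a b := by
  unfold traceP
  positivity

lemma traceP_le_one (a b : U) : traceP r n a b ≤ 1 :=
  div_le_one_of_le₀ (traceT_le_sum r n a b) (by positivity)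

lemma traceP_eq_zero {a b : U} (h : a ∉ traceStates r n ∨ b ∉ traceStates r n) :
    traceP r n a b = 0 := by
  rw [traceP, traceT_eq_zero r n h, Nat.cast_zero, zero_div]

variable {r n}

lemma exists_lt_eq_of_mem_traceStates (hclosed : ∃ i < n, r i = r n) {a : U}
    (ha : a ∈ traceStates r n) : ∃ i < n, r i = a := by
  obtain ⟨j, hj, rfl⟩ := mem_image.1 ha
  rcases (Nat.lt_succ_iff_lt_or_eq.1 (mem_range.1 hj)) with hjn | rfl
  · exact ⟨j, hjn, rfl⟩
  · exact hclosed

lemma sum_traceT_pos (hclosed : ∃ i < n, r i = r n) {a : U} (ha : a ∈ traceStates r n) :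
    0 < ∑ c ∈ traceStates r n, (traceT r n a c : ℝ) := by
  obtain ⟨i, hi, rfl⟩ := exists_lt_eq_of_mem_traceStates hclosed ha
  exact (Nat.cast_pos.2 (traceT_pos r n hi)).trans_le (traceT_le_sum r n _ _)

lemma traceP_pos (hclosed : ∃ i < n, r i = r n) {i : ℕ} (hi : i < n) :
    0 < traceP r n (r i) (r (i + 1)) :=
  div_pos (Nat.cast_pos.2 (traceT_pos r n hi))
    (sum_traceT_pos hclosed (mem_traceStates r n hi.le))

lemma sum_traceP (hclosed : ∃ i < n, r i = r n) {a : U} (ha : a ∈ traceStates r n) :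
    ∑ b ∈ traceStates r n, traceP r n a b = 1 := by
  unfold traceP
  rw [← sum_div, div_self (sum_traceT_pos hclosed ha).ne']

end Trace

section MaximumLikelihood

variable {U : Type*} [DecidableEq U] {r : ℕ → U} {n : ℕ}

noncomputable def traceMC (hclosed : ∃ i < n, r i = r n) : FinMC U where
  S := traceStates r n
  S_ne := ⟨r 0, mem_traceStates r n n.zero_le⟩
  P := traceP r n
  P_nonneg := traceP_nonneg r n
  P_le_one := traceP_le_one r n
  P_zero _ _ := traceP_eq_zero r n
  P_row _ := sum_traceP hclosed
  μ a := if a = r 0 then 1 else 0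
  μ_nonneg a := by positivity
  μ_zero a ha := if_neg fun h : a = r 0 => ha (h ▸ mem_traceStates r n n.zero_le)
  μ_sum := by rw [sum_ite_eq' _ _ _, if_pos (mem_traceStates r n n.zero_le)]

lemma traceMC_lik (hclosed : ∃ i < n, r i = r n) :
    (traceMC hclosed).lik r n = traceLik r n := by
  simp [FinMC.lik, traceMC, traceLik]

lemma lik_eq_prod_pow_traceT (M : FinMC U) :
    M.lik r n =
      M.μ (r 0) * ∏ a ∈ traceStates r n, ∏ b ∈ traceStates r n, M.P a b ^ traceT r n a b := by
  rw [FinMC.lik, prod_eq_prod_pow_traceT]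

lemma traceLik_eq_prod_pow_traceT :
    traceLik r n = ∏ a ∈ traceStates r n, ∏ b ∈ traceStates r n, traceP r n a b ^ traceT r n a b :=
  prod_eq_prod_pow_traceT r n _

lemma prod_P_pow_traceT_nonneg (M : FinMC U) (a : U) :
    0 ≤ ∏ b ∈ traceStates r n, M.P a b ^ traceT r n a b :=
  prod_nonneg fun b _ => pow_nonneg (M.P_nonneg a b) _

lemma prod_P_pow_traceT_le (hclosed : ∃ i < n, r i = r n) (M : FinMC U) {a : U}
    (ha : a ∈ traceStates r n) :
    ∏ b ∈ traceStates r n, M.P a b ^ traceT r n a b ≤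
      ∏ b ∈ traceStates r n, traceP r n a b ^ traceT r n a b :=
  prod_pow_le_prod_div_sum_pow (sum_traceT_pos hclosed ha) (fun b _ => M.P_nonneg a b)
    (M.sum_P_le_one a _)

lemma prod_P_pow_traceT_lt (hclosed : ∃ i < n, r i = r n) (M : FinMC U) {a : U}
    (ha : a ∈ traceStates r n) (hne : ∃ b ∈ traceStates r n, M.P a b ≠ traceP r n a b) :
    ∏ b ∈ traceStates r n, M.P a b ^ traceT r n a b <
      ∏ b ∈ traceStates r n, traceP r n a b ^ traceT r n a b :=
  prod_pow_lt_prod_div_sum_pow (sum_traceT_pos hclosed ha) (fun b _ => M.P_nonneg a b)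
    (M.sum_P_le_one a _) hne

lemma lik_le_traceLik (hclosed : ∃ i < n, r i = r n) (M : FinMC U) :
    M.lik r n ≤ traceLik r n := by
  rw [lik_eq_prod_pow_traceT, traceLik_eq_prod_pow_traceT]
  exact (mul_le_of_le_one_left (prod_nonneg fun a _ => prod_P_pow_traceT_nonneg M a)
    (M.μ_le_one _)).trans (prod_le_prod (fun a _ => prod_P_pow_traceT_nonneg M a)
      fun a ha => prod_P_pow_traceT_le hclosed M ha)

lemma lik_eq_traceLik_iff (hclosed : ∃ i < n, r i = r n) (M : FinMC U) :
    M.lik r n = traceLik r n ↔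
      M.μ (r 0) = 1 ∧ ∀ a ∈ traceStates r n, ∀ b ∈ traceStates r n, M.P a b = traceP r n a b := by
  have hrow_nonneg : ∀ a ∈ traceStates r n, 0 ≤ ∏ b ∈ traceStates r n, M.P a b ^ traceT r n a b :=
    fun a _ => prod_P_pow_traceT_nonneg M a
  have hrow_le (a) (ha : a ∈ traceStates r n) := prod_P_pow_traceT_le hclosed M ha
  have htrace_row_pos : ∀ a ∈ traceStates r n,
      0 < ∏ b ∈ traceStates r n, traceP r n a b ^ traceT r n a b :=
    fun a _ => prod_pos fun b hb => div_sum_pow_pos hb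
  rw [lik_eq_prod_pow_traceT, traceLik_eq_prod_pow_traceT]
  constructor
  · intro h
    have hμ : M.μ (r 0) = 1 := by
      nlinarith [M.μ_le_one (r 0), M.μ_nonneg (r 0), prod_nonneg hrow_nonneg,
        prod_le_prod hrow_nonneg hrow_le, prod_pos htrace_row_pos]
    refine ⟨hμ, fun a ha b hb => by_contra fun hne => ?_⟩
    rw [hμ, one_mul] at h
    exact (prod_lt_prod_of_nonneg hrow_nonneg hrow_le htrace_row_pos
      ⟨a, ha, prod_P_pow_traceT_lt hclosed M ha ⟨b, hb, hne⟩⟩).ne h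
  · rintro ⟨hμ, hP⟩
    rw [hμ, one_mul]
    exact prod_congr rfl fun a ha => prod_congr rfl fun b hb => by rw [hP a ha b hb]

lemma setOf_reach_eq_traceStates (hclosed : ∃ i < n, r i = r n) (M : FinMC U)
    (hP : ∀ a ∈ traceStates r n, ∀ b ∈ traceStates r n, M.P a b = traceP r n a b) :
    {u | M.reach (r 0) u} = ↑(traceStates r n) := by
  have hpath : ∀ i < n, 0 < M.P (r i) (r (i + 1)) := fun i hi =>
    hP _ (mem_traceStates r n hi.le) _ (mem_traceStates r n hi) ▸ traceP_pos hclosed hi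
  have hrows : ∀ a ∈ traceStates r n, ∑ b ∈ traceStates r n, M.P a b = 1 := fun a ha =>
    (sum_congr rfl (hP a ha)).trans (sum_traceP hclosed ha)
  ext u
  refine ⟨M.mem_of_reach hrows (mem_traceStates r n n.zero_le), fun hu => ?_⟩
  obtain ⟨j, hj, rfl⟩ := mem_image.1 hu
  exact M.reach_of_P_pos hpath (Nat.lt_succ_iff.1 (mem_range.1 hj))

end MaximumLikelihood

/-- Let `π = r 0 ⋯ r n` be a closed finite trace.
A finite-state Markov chain `M = (S, P, μ)` has maximum likelihood of
generating `π` iff (i) `μ (r 0) = 1`, (ii) the set of states of `M` reachable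
from `r 0` equals `S_π`, and (iii) `P` agrees with `P_π` on `S_π × S_π`. -/
theorem maxLik_iff {U : Type*} [DecidableEq U] (r : ℕ → U) (n : ℕ)
    (hclosed : ∃ i < n, r i = r n) (M : FinMC U) :
    (∀ M' : FinMC U, M'.lik r n ≤ M.lik r n) ↔
      (M.μ (r 0) = 1 ∧
       {u | M.reach (r 0) u} = ↑(traceStates r n) ∧
       ∀ a ∈ traceStates r n, ∀ b ∈ traceStates r n, M.P a b = traceP r n a b) := by
  have hmax : (∀ M' : FinMC U, M'.lik r n ≤ M.lik r n) ↔ M.lik r n = traceLik r n :=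
    ⟨fun h => (lik_le_traceLik hclosed M).antisymm (traceMC_lik hclosed ▸ h (traceMC hclosed)),
      fun h M' => h ▸ lik_le_traceLik hclosed M'⟩
  rw [hmax, lik_eq_traceLik_iff hclosed]
  exact ⟨fun ⟨hμ, hP⟩ => ⟨hμ, setOf_reach_eq_traceStates hclosed M hP, hP⟩,
    fun ⟨hμ, _, hP⟩ => ⟨hμ, hP⟩⟩
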